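/- arXiv:0807.4336 — 3 statements merged into one kernel-verified Lean document; each statement's English description precedes it below -/
import Mathlib

section
/- Let ψ be a nonnegative Lebesgue-integrable function on (0,∞) satisfying lim_{t→∞} [ t · sup_{u>t} ψ(u) ] = 0. Then I(ψ, t) → 0 as t → ∞. -/
open MeasureTheory Set Filter Real

lemma Iweight_aux_ge (γ : ℝ) (hγ : γ ∈ Ioo (0:ℝ) 1) {t u : ℝ} (hu : 0 < u) (hut : u < t) :
    1 ≤ (1 - u / t) ^ (γ - 1) := by
  have ht : 0 < t := hu.trans hut
  have h1 : 0 < 1 - u / t := by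
    have : u / t < 1 := (div_lt_one ht).2 hut
    linarith
  have h2 : 1 - u / t ≤ 1 := by
    have : 0 < u / t := div_pos hu ht
    linarith
  exact Real.one_le_rpow_of_pos_of_le_one_of_nonpos h1 h2 (by linarith [hγ.2])

lemma Iweight_aux_le (γ : ℝ) (hγ : γ ∈ Ioo (0:ℝ) 1) {t u : ℝ} (hu : 0 < u) (hut : u ≤ t / 2) :
    (1 - u / t) ^ (γ - 1) - 1 ≤ 2 * u / t := by
  have ht : 0 < t := by linarith
  set x := u / t with hxdef
  have hx0 : 0 < x := div_pos hu ht
  have hx2 : x ≤ 1 / 2 := by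
    rw [hxdef, div_le_div_iff₀ ht (by norm_num)]
    linarith
  have h1x : 0 < 1 - x := by linarith
  set y := (1 - x) ^ (1 - γ) with hydef
  have hy_pos : 0 < y := Real.rpow_pos_of_pos h1x _
  have hy_ge : 1 - x ≤ y := by
    have := Real.rpow_le_rpow_of_exponent_ge h1x (by linarith) (by linarith [hγ.1] : 1 - γ ≤ 1)
    rwa [Real.rpow_one] at this
  have hw : (1 - x) ^ (γ - 1) = y⁻¹ := by
    rw [hydef, ← Real.rpow_neg h1x.le]
    norm_num
  rw [hw]
  have h1 : 1 ≤ (1 + 2 * x) * y := by nlinarith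
  have key : 0 ≤ y⁻¹ * ((1 + 2 * x) * y - 1) :=
    mul_nonneg (inv_nonneg.2 hy_pos.le) (by linarith)
  have expand : y⁻¹ * ((1 + 2 * x) * y) = 1 + 2 * x := by
    field_simp
  have h2 : y⁻¹ ≤ 1 + 2 * x := by nlinarith [expand, key]
  have : 2 * x = 2 * u / t := by rw [hxdef]; ring
  linarith [this ▸ h2]

lemma Iweight_aux_intOn (γ : ℝ) (hγ : γ ∈ Ioo (0:ℝ) 1) {t : ℝ} (ht : 0 < t) :
    IntegrableOn (fun u => (1 - u / t) ^ (γ - 1)) (Ioo (t/2) t) := by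
  have h1 : IntervalIntegrable (fun v : ℝ => v ^ (γ - 1)) volume 0 (t/2) :=
    intervalIntegral.intervalIntegrable_rpow' (by linarith [hγ.1])
  have h2 : IntervalIntegrable (fun v : ℝ => (t - v) ^ (γ - 1)) volume (t/2) t := by
    have h := (h1.comp_sub_left t)
    rw [sub_zero, show t - t/2 = t/2 from by ring] at h
    exact h.symm
  have h3 : IntegrableOn (fun v : ℝ => (t - v) ^ (γ - 1)) (Ioo (t/2) t) :=
    ((intervalIntegrable_iff_integrableOn_Ioc_of_le (by linarith)).1 h2).mono_set Ioo_subset_Ioc_self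
  have h4 : IntegrableOn (fun v : ℝ => (t - v) ^ (γ - 1) * (t⁻¹) ^ (γ - 1)) (Ioo (t/2) t) :=
    h3.mul_const _
  apply h4.congr_fun ?_ measurableSet_Ioo
  intro u hu
  have h5 : (1 : ℝ) - u / t = (t - u) * t⁻¹ := by field_simp
  show (t - u) ^ (γ - 1) * t⁻¹ ^ (γ - 1) = (1 - u / t) ^ (γ - 1)
  rw [h5, Real.mul_rpow (by linarith [hu.2]) (by positivity)]

lemma Iweight_aux_intval (γ : ℝ) (hγ : γ ∈ Ioo (0:ℝ) 1) {t : ℝ} (ht : 0 < t) :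
    ∫ u in Ioo (t/2) t, (1 - u / t) ^ (γ - 1) = t * ((2:ℝ) ^ (-γ) / γ) := by
  have key : ∀ u ∈ uIcc (t/2) t, (1 - u / t) ^ (γ - 1)
      = (fun v : ℝ => v ^ (γ - 1)) (t - u) * (t⁻¹) ^ (γ - 1) := by
    intro u hu
    rw [uIcc_of_le (by linarith)] at hu
    have h5 : (1 : ℝ) - u / t = (t - u) * t⁻¹ := by field_simp
    rw [h5, Real.mul_rpow (by linarith [hu.2]) (by positivity)]
  have step1 : ∫ u in Ioo (t/2) t, (1 - u / t) ^ (γ - 1)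
      = ∫ u in (t/2)..t, (1 - u / t) ^ (γ - 1) := by
    rw [intervalIntegral.integral_of_le (by linarith), integral_Ioc_eq_integral_Ioo]
  have step2 : ∫ u in (t/2)..t, (1 - u / t) ^ (γ - 1)
      = (∫ u in (t/2)..t, (fun v : ℝ => v ^ (γ - 1)) (t - u)) * (t⁻¹) ^ (γ - 1) := by
    rw [← intervalIntegral.integral_mul_const]
    exact intervalIntegral.integral_congr key
  have step3 : (∫ u in (t/2)..t, (fun v : ℝ => v ^ (γ - 1)) (t - u))
      = ∫ v in (0:ℝ)..(t/2), v ^ (γ - 1) := by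
    rw [intervalIntegral.integral_comp_sub_left (fun v : ℝ => v ^ (γ - 1)) t]
    norm_num
    rw [show t - t/2 = t/2 from by ring]
  have step4 : (∫ v in (0:ℝ)..(t/2), v ^ (γ - 1)) = (t/2) ^ γ / γ := by
    rw [integral_rpow (Or.inl (by linarith [hγ.1]))]
    rw [Real.zero_rpow (by linarith [hγ.1] : γ - 1 + 1 ≠ 0)]
    ring_nf
  have step5 : (t/2) ^ γ / γ * (t⁻¹) ^ (γ - 1) = t * ((2:ℝ) ^ (-γ) / γ) := by
    rw [Real.div_rpow ht.le (by norm_num), Real.inv_rpow ht.le, ← Real.rpow_neg ht.le,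
      Real.rpow_neg (by norm_num : (0:ℝ) ≤ 2)]
    rw [show t ^ γ / 2 ^ γ / γ * t ^ (-(γ - 1)) = t ^ γ * t ^ (-(γ - 1)) / 2 ^ γ / γ from by ring,
      ← Real.rpow_add ht, show γ + -(γ - 1) = 1 from by ring, Real.rpow_one]
    ring
  rw [step1, step2, step3, step4, step5]

lemma Iweight_aux_A (γ : ℝ) (ψ : ℝ → ℝ) (hψ_nonneg : ∀ u : ℝ, 0 < u → 0 ≤ ψ u)
    (hψ_int : IntegrableOn ψ (Ioi 0)) :
    Tendsto (fun t : ℝ => ∫ u in Ioc (0:ℝ) (t/2), (2 * u / t) * ψ u) atTop (nhds 0) := by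
  have hψm : AEStronglyMeasurable ψ (volume.restrict (Ioi 0)) := hψ_int.aestronglyMeasurable
  set F : ℝ → ℝ → ℝ := fun t u => (Ioc (0:ℝ) (t/2)).indicator (fun u => (2 * u / t) * ψ u) u
    with hF
  have hAeq : ∀ t : ℝ, (∫ u in Ioc (0:ℝ) (t/2), (2 * u / t) * ψ u) = ∫ u in Ioi (0:ℝ), F t u := by
    intro t
    rw [hF]
    rw [integral_indicator measurableSet_Ioc, Measure.restrict_restrict measurableSet_Ioc,
      inter_eq_left.2 Ioc_subset_Ioi_self]
  have key : Tendsto (fun t : ℝ => ∫ u in Ioi (0:ℝ), F t u) atTop (nhds (∫ u in Ioi (0:ℝ), (0:ℝ))) := by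
    apply tendsto_integral_filter_of_dominated_convergence (bound := ψ)
    · filter_upwards with t
      exact (((continuous_const.mul continuous_id).div_const t).aestronglyMeasurable.mul
        hψm).indicator measurableSet_Ioc
    · filter_upwards [eventually_ge_atTop (0:ℝ)] with t ht
      rw [ae_restrict_iff' measurableSet_Ioi]
      filter_upwards with u hu
      rcases em (u ∈ Ioc (0:ℝ) (t/2)) with h | h
      · rw [hF]
        simp only [indicator_of_mem h]
        have hu0 : 0 < u := h.1
        have htpos : 0 < t := by
          rcases lt_or_eq_of_le ht with h' | h'
          · exact h'
          · exfalso; rw [← h'] at h; have := h.2; simp at this; linarith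
        have h1 : 2 * u / t ≤ 1 := by
          rw [div_le_one htpos]; linarith [h.2]
        have h2 : 0 ≤ 2 * u / t := by positivity
        rw [Real.norm_eq_abs, abs_of_nonneg (mul_nonneg h2 (hψ_nonneg u hu0))]
        exact mul_le_of_le_one_left (hψ_nonneg u hu0) h1
      · rw [hF]; simp only [indicator_of_notMem h, norm_zero]
        exact hψ_nonneg u hu
    · exact hψ_int
    · rw [ae_restrict_iff' measurableSet_Ioi]
      filter_upwards with u hu
      have hu0 : 0 < u := hu
      have base : Tendsto (fun t : ℝ => (2 * u * ψ u) / t) atTop (nhds 0) :=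
        tendsto_const_nhds.div_atTop tendsto_id
      apply base.congr'
      filter_upwards [eventually_ge_atTop (2 * u)] with t ht
      have hmem : u ∈ Ioc (0:ℝ) (t/2) := ⟨hu0, by linarith⟩
      rw [hF]
      simp only [indicator_of_mem hmem]
      ring
  rw [integral_zero] at key
  exact key.congr (fun t => (hAeq t).symm)

/-- `I(ψ, t) = ∫_0^t [ (1 − u/t)^{γ−1} − 1 ] ψ(u) du`. -/
noncomputable def Iweight (γ : ℝ) (ψ : ℝ → ℝ) (t : ℝ) : ℝ :=
  ∫ u in Ioo (0 : ℝ) t, ((1 - u / t) ^ (γ - 1) - 1) * ψ u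

/-- If `ψ ≥ 0` is Lebesgue integrable on `(0,∞)` and
`t · sup_{u>t} ψ(u) → 0` as `t → ∞`, then `I(ψ, t) → 0` as `t → ∞`. -/
theorem Iweight_tendsto_zero_of_sup (γ : ℝ) (hγ : γ ∈ Ioo (0 : ℝ) 1)
    (ψ : ℝ → ℝ) (hψ_nonneg : ∀ u : ℝ, 0 < u → 0 ≤ ψ u)
    (hψ_int : IntegrableOn ψ (Ioi 0))
    (hbdd : ∀ᶠ t : ℝ in atTop, BddAbove (ψ '' Ioi t))
    (hsup : Tendsto (fun t : ℝ => t * sSup (ψ '' Ioi t)) atTop (nhds 0)) :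
    Tendsto (fun t : ℝ => Iweight γ ψ t) atTop (nhds 0) := by
  obtain ⟨T₀, hT₀⟩ := eventually_atTop.mp hbdd
  set T : ℝ := max T₀ 0 with hTdef
  have hTbdd : ∀ s : ℝ, T ≤ s → BddAbove (ψ '' Ioi s) :=
    fun s hs => hT₀ s (le_trans (le_max_left _ _) hs)
  set A : ℝ → ℝ := fun t => ∫ u in Ioc (0:ℝ) (t/2), (2 * u / t) * ψ u with hAdef
  set B : ℝ → ℝ := fun t => sSup (ψ '' Ioi (t/2)) * (t * ((2:ℝ) ^ (-γ) / γ)) with hBdef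
  have hA : Tendsto A atTop (nhds 0) := Iweight_aux_A γ ψ hψ_nonneg hψ_int
  have hB : Tendsto B atTop (nhds 0) := by
    have hhalf : Tendsto (fun t : ℝ => t / 2) atTop atTop :=
      tendsto_id.atTop_div_const (by norm_num)
    have h1 : Tendsto (fun t : ℝ => (t / 2) * sSup (ψ '' Ioi (t/2))) atTop (nhds 0) :=
      hsup.comp hhalf
    have h2 := h1.const_mul (2 * ((2:ℝ) ^ (-γ) / γ))
    rw [mul_zero] at h2
    apply h2.congr
    intro t
    rw [hBdef]
    ring
  apply tendsto_of_tendsto_of_tendsto_of_le_of_le' (g := fun _ : ℝ => (0:ℝ))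
    (h := fun t => A t + B t) tendsto_const_nhds (by simpa using hA.add hB)
  · -- 0 ≤ Iweight
    filter_upwards [eventually_gt_atTop (0:ℝ)] with t ht
    apply setIntegral_nonneg measurableSet_Ioo
    intro u hu
    exact mul_nonneg (sub_nonneg.2 (Iweight_aux_ge γ hγ hu.1 hu.2)) (hψ_nonneg u hu.1)
  · -- Iweight ≤ A + B
    filter_upwards [eventually_ge_atTop (2 * T + 2)] with t ht
    have hT0 : (0:ℝ) ≤ T := le_max_right _ _
    have htpos : (0:ℝ) < t := by linarith
    have hhalfT : T ≤ t / 2 := by linarith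
    set M : ℝ := sSup (ψ '' Ioi (t/2)) with hMdef
    have hMbdd : BddAbove (ψ '' Ioi (t/2)) := hTbdd _ hhalfT
    have hMle : ∀ u : ℝ, t/2 < u → ψ u ≤ M := fun u hu =>
      le_csSup hMbdd ⟨u, hu, rfl⟩
    have hM0 : 0 ≤ M := le_trans (hψ_nonneg (t/2 + 1) (by linarith)) (hMle _ (by linarith))
    set h : ℝ → ℝ := fun u => ((1 - u / t) ^ (γ - 1) - 1) * ψ u with hhdef
    have hψm : AEStronglyMeasurable ψ (volume.restrict (Ioi 0)) := hψ_int.aestronglyMeasurable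
    have hwm : Measurable fun u : ℝ => (1 - u / t) ^ (γ - 1) - 1 := by fun_prop
    -- integrability on Ioc 0 (t/2)
    have hψ1 : IntegrableOn ψ (Ioc (0:ℝ) (t/2)) := hψ_int.mono_set Ioc_subset_Ioi_self
    have hsub2 : Ioo (t/2) t ⊆ Ioi (0:ℝ) :=
      fun u hu => lt_trans (by linarith) hu.1
    have hψ2 : IntegrableOn ψ (Ioo (t/2) t) := hψ_int.mono_set hsub2
    have hasm1 : AEStronglyMeasurable h (volume.restrict (Ioc (0:ℝ) (t/2))) :=
      hwm.aestronglyMeasurable.mul hψ1.aestronglyMeasurable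
    have hasm2 : AEStronglyMeasurable h (volume.restrict (Ioo (t/2) t)) :=
      hwm.aestronglyMeasurable.mul hψ2.aestronglyMeasurable
    have hint1 : IntegrableOn h (Ioc (0:ℝ) (t/2)) := by
      apply hψ1.mono' hasm1
      rw [ae_restrict_iff' measurableSet_Ioc]
      filter_upwards with u hu
      have hu0 : 0 < u := hu.1
      have hut : u < t := lt_of_le_of_lt hu.2 (by linarith)
      have hge := Iweight_aux_ge γ hγ hu0 hut
      have hle := Iweight_aux_le γ hγ hu0 hu.2
      have h1 : 2 * u / t ≤ 1 := by rw [div_le_one htpos]; linarith [hu.2]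
      rw [hhdef, Real.norm_eq_abs,
        abs_of_nonneg (mul_nonneg (by linarith) (hψ_nonneg u hu0))]
      exact mul_le_of_le_one_left (hψ_nonneg u hu0) (by linarith)
    have hw2 : IntegrableOn (fun u => (1 - u / t) ^ (γ - 1)) (Ioo (t/2) t) :=
      Iweight_aux_intOn γ hγ htpos
    have hint2 : IntegrableOn h (Ioo (t/2) t) := by
      apply Integrable.mono' (g := fun u => M * (1 - u / t) ^ (γ - 1)) (hw2.const_mul M) hasm2
      rw [ae_restrict_iff' measurableSet_Ioo]
      filter_upwards with u hu
      have hu0 : 0 < u := hsub2 hu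
      have hge := Iweight_aux_ge γ hγ hu0 hu.2
      have hψle : ψ u ≤ M := hMle u hu.1
      rw [hhdef, Real.norm_eq_abs,
        abs_of_nonneg (mul_nonneg (by linarith) (hψ_nonneg u hu0))]
      calc ((1 - u / t) ^ (γ - 1) - 1) * ψ u ≤ (1 - u / t) ^ (γ - 1) * M :=
            mul_le_mul (by linarith) hψle (hψ_nonneg u hu0) (by linarith)
        _ = M * (1 - u / t) ^ (γ - 1) := mul_comm _ _
    have hsplit : Iweight γ ψ t = (∫ u in Ioc (0:ℝ) (t/2), h u) + ∫ u in Ioo (t/2) t, h u := by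
      rw [Iweight, ← Ioc_union_Ioo_eq_Ioo (by linarith : (0:ℝ) ≤ t/2) (by linarith : t/2 < t)]
      exact setIntegral_union
        (Set.disjoint_left.2 fun u h1 h2 => absurd h1.2 (not_le.2 h2.1))
        measurableSet_Ioo hint1 hint2
    have hpart1 : (∫ u in Ioc (0:ℝ) (t/2), h u) ≤ A t := by
      have hAint : IntegrableOn (fun u => (2 * u / t) * ψ u) (Ioc (0:ℝ) (t/2)) := by
        have hm : AEStronglyMeasurable (fun u : ℝ => (2 * u / t) * ψ u)
            (volume.restrict (Ioc (0:ℝ) (t/2))) :=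
          (((continuous_const.mul continuous_id).div_const
            t).aestronglyMeasurable.mul hψ1.aestronglyMeasurable : _)
        apply hψ1.mono' hm
        rw [ae_restrict_iff' measurableSet_Ioc]
        filter_upwards with u hu
        have hu0 : 0 < u := hu.1
        have h1 : 2 * u / t ≤ 1 := by rw [div_le_one htpos]; linarith [hu.2]
        rw [Real.norm_eq_abs, abs_of_nonneg (mul_nonneg (by positivity) (hψ_nonneg u hu0))]
        exact mul_le_of_le_one_left (hψ_nonneg u hu0) h1
      apply setIntegral_mono_on hint1 hAint measurableSet_Ioc
      intro u hu
      exact mul_le_mul_of_nonneg_right (Iweight_aux_le γ hγ hu.1 hu.2) (hψ_nonneg u hu.1)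
    have hpart2 : (∫ u in Ioo (t/2) t, h u) ≤ B t := by
      have step : (∫ u in Ioo (t/2) t, h u) ≤ ∫ u in Ioo (t/2) t, M * (1 - u / t) ^ (γ - 1) := by
        apply setIntegral_mono_on hint2 (hw2.const_mul M) measurableSet_Ioo
        intro u hu
        have hu0 : 0 < u := hsub2 hu
        have hge := Iweight_aux_ge γ hγ hu0 hu.2
        have hψle : ψ u ≤ M := hMle u hu.1
        calc ((1 - u / t) ^ (γ - 1) - 1) * ψ u ≤ (1 - u / t) ^ (γ - 1) * M :=
              mul_le_mul (by linarith) hψle (hψ_nonneg u hu0) (by linarith)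
          _ = M * (1 - u / t) ^ (γ - 1) := mul_comm _ _
      calc (∫ u in Ioo (t/2) t, h u) ≤ ∫ u in Ioo (t/2) t, M * (1 - u / t) ^ (γ - 1) := step
        _ = M * ∫ u in Ioo (t/2) t, (1 - u / t) ^ (γ - 1) := integral_const_mul M _
        _ = M * (t * ((2:ℝ) ^ (-γ) / γ)) := by rw [Iweight_aux_intval γ hγ htpos]
        _ = B t := rfl
    rw [hsplit]
    exact add_le_add hpart1 hpart2
end

section
/- (Counterexample.) Define ψ(u) = Σ_{n=1}^∞ n^{(2+γ)/(1−γ)} · 1_{(n − n^{−(4−γ)/(1−γ)}, n)}(u) for u > 0. Then ψ is Lebesgue integrable on (0,∞), with ∫_0^∞ ψ(u) du = Σ_{n=1}^∞ n^{−2} < ∞, yet for every integer n ≥ 1 one has I(ψ, n) ≥ γ^{−1} n^{3−2γ} − n^{−2}; in particular limsup_{t→∞} I(ψ, t) = ∞, so ∫_0^t (1 − u/t)^{γ−1} ψ(u) du does not converge to ∫_0^∞ ψ(u) du as t → ∞. -/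
open MeasureTheory Set Filter Real

/-- The counterexample function
`ψ(u) = Σ_{n≥1} n^{(2+γ)/(1−γ)} 1_{(n − n^{−(4−γ)/(1−γ)}, n)}(u)`. -/
noncomputable def psiCE (γ : ℝ) (u : ℝ) : ℝ :=
  ∑' n : ℕ,
    indicator
      (Ioo (((n : ℝ) + 1) - ((n : ℝ) + 1) ^ (-((4 - γ) / (1 - γ)))) ((n : ℝ) + 1))
      (fun _ => ((n : ℝ) + 1) ^ ((2 + γ) / (1 - γ))) u

/-!
The bump of `psiCE γ` just left of `n` has height `n^β` and width `w = n^{-α}`, with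
`α = (4 - γ)/(1 - γ)` and `β = (2 + γ)/(1 - γ)`, so it carries mass `n^{β-α} = n^{-2}`, and the
masses are summable. The kernel `(1 - u/n)^{γ-1}` is singular exactly at the right end of that
bump, where its integral over the bump is `n^{1-γ} w^γ / γ`; the bump therefore contributes
`n^{1-γ-αγ+β} / γ = n^{3-2γ} / γ` to `I(ψ, n)`, which is unbounded.
-/

section

variable {γ t a u : ℝ}

theorem hasDerivAt_one_sub_div_rpow (hγ : γ ≠ 0) (ht : 0 < t) (hu : u < t) :
    HasDerivAt (fun v => -(t / γ) * (1 - v / t) ^ γ) ((1 - u / t) ^ (γ - 1)) u := by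
  have hpos : 0 < 1 - u / t := by rw [sub_pos, div_lt_one ht]; exact hu
  refine (((((hasDerivAt_id' u).div_const t).const_sub 1).rpow_const
    (Or.inl hpos.ne')).const_mul _).congr_deriv ?_
  field_simp

theorem continuousOn_one_sub_div_rpow (hγ : 0 < γ) :
    ContinuousOn (fun v => -(t / γ) * (1 - v / t) ^ γ) (Icc a t) :=
  continuousOn_const.mul (ContinuousOn.rpow_const (by fun_prop) fun _ _ => Or.inr hγ.le)

theorem integrableOn_one_sub_div_rpow (hγ : 0 < γ) (ht : 0 < t) :
    IntegrableOn (fun u => (1 - u / t) ^ (γ - 1)) (Ioc a t) :=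
  intervalIntegral.integrableOn_deriv_of_nonneg (continuousOn_one_sub_div_rpow hγ)
    (fun _ hu => hasDerivAt_one_sub_div_rpow hγ.ne' ht hu.2) fun _ hu =>
    rpow_nonneg (by rw [sub_nonneg, div_le_one ht]; exact hu.2.le) _

theorem integral_one_sub_div_rpow (hγ : 0 < γ) (ht : 0 < t) (ha : a ≤ t) :
    ∫ u in a..t, (1 - u / t) ^ (γ - 1) = t / γ * (1 - a / t) ^ γ := by
  rw [intervalIntegral.integral_eq_sub_of_hasDerivAt_of_le ha (continuousOn_one_sub_div_rpow hγ)
    (fun _ hu => hasDerivAt_one_sub_div_rpow hγ.ne' ht hu.2)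
    ((intervalIntegrable_iff_integrableOn_Ioc_of_le ha).2 (integrableOn_one_sub_div_rpow hγ ht))]
  simp [div_self ht.ne', zero_rpow hγ.ne']

theorem setIntegral_one_sub_div_rpow_sub_one (hγ : 0 < γ) (ht : 0 < t) {w : ℝ} (hw : 0 ≤ w) :
    ∫ u in Ioo (t - w) t, ((1 - u / t) ^ (γ - 1) - 1) = t / γ * (w / t) ^ γ - w := by
  have hle : t - w ≤ t := by linarith
  rw [← integral_Ioc_eq_integral_Ioo, ← intervalIntegral.integral_of_le hle,
    intervalIntegral.integral_sub ((intervalIntegrable_iff_integrableOn_Ioc_of_le hle).2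
      (integrableOn_one_sub_div_rpow hγ ht)) intervalIntegrable_const,
    integral_one_sub_div_rpow hγ ht hle, one_sub_div ht.ne', sub_sub_cancel,
    intervalIntegral.integral_const, smul_eq_mul, mul_one, sub_sub_cancel]

theorem one_le_one_sub_div_rpow (hγ : γ ≤ 1) (hu : 0 ≤ u) (hut : u < t) :
    1 ≤ (1 - u / t) ^ (γ - 1) :=
  one_le_rpow_of_pos_of_le_one_of_nonpos (by rw [sub_pos, div_lt_one (hu.trans_lt hut)]; exact hut)
    (by linarith [div_nonneg hu (hu.trans_lt hut).le]) (by linarith)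

theorem integral_weight_mul_eq_Iweight_add {ψ : ℝ → ℝ}
    (hI : IntegrableOn (fun u => ((1 - u / t) ^ (γ - 1) - 1) * ψ u) (Ioo 0 t))
    (hψ : IntegrableOn ψ (Ioo 0 t)) :
    ∫ u in Ioo 0 t, (1 - u / t) ^ (γ - 1) * ψ u = Iweight γ ψ t + ∫ u in Ioo 0 t, ψ u := by
  rw [Iweight, ← integral_add hI hψ]
  congr 1 with u
  ring

end

noncomputable def bumpSet (γ : ℝ) (k : ℕ) : Set ℝ :=
  Ioo (((k : ℝ) + 1) - ((k : ℝ) + 1) ^ (-((4 - γ) / (1 - γ)))) ((k : ℝ) + 1)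

noncomputable def bumpHeight (γ : ℝ) (k : ℕ) : ℝ :=
  ((k : ℝ) + 1) ^ ((2 + γ) / (1 - γ))

section

variable {γ u : ℝ}

theorem psiCE_eq_tsum (γ u : ℝ) :
    psiCE γ u = ∑' k, (bumpSet γ k).indicator (fun _ => bumpHeight γ k) u := rfl

theorem measurableSet_bumpSet (γ : ℝ) (k : ℕ) : MeasurableSet (bumpSet γ k) := measurableSet_Ioo

theorem bumpSet_subset_Ioo (hγ : γ < 1) (k : ℕ) : bumpSet γ k ⊆ Ioo (k : ℝ) (k + 1) := by
  have hwidth : ((k : ℝ) + 1) ^ (-((4 - γ) / (1 - γ))) ≤ 1 :=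
    rpow_le_one_of_one_le_of_nonpos (by linarith [k.cast_nonneg (α := ℝ)])
      (neg_nonpos.2 (div_nonneg (by linarith) (by linarith)))
  exact Ioo_subset_Ioo_left (by linarith)

theorem floor_eq_of_mem_bumpSet (hγ : γ < 1) {k : ℕ} (hu : u ∈ bumpSet γ k) : ⌊u⌋₊ = k := by
  obtain ⟨hk, hk1⟩ := bumpSet_subset_Ioo hγ k hu
  exact (Nat.floor_eq_iff ((k.cast_nonneg).trans hk.le)).2 ⟨hk.le, hk1⟩

theorem bumpSet_subset_Ioi (hγ : γ < 1) (k : ℕ) : bumpSet γ k ⊆ Ioi 0 := fun _ hu =>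
  (k.cast_nonneg).trans_lt (bumpSet_subset_Ioo hγ k hu).1

theorem eq_of_mem_bumpSet (hγ : γ < 1) {j k : ℕ} (hj : u ∈ bumpSet γ j) (hk : u ∈ bumpSet γ k) :
    j = k :=
  (floor_eq_of_mem_bumpSet hγ hj).symm.trans (floor_eq_of_mem_bumpSet hγ hk)

theorem pairwise_disjoint_bumpSet (hγ : γ < 1) : Pairwise (Function.onFun Disjoint (bumpSet γ)) :=
  fun _ _ hjk => disjoint_left.2 fun _ hj hk => hjk (eq_of_mem_bumpSet hγ hj hk)

theorem psiCE_eq_of_mem_bumpSet (hγ : γ < 1) {k : ℕ} (hu : u ∈ bumpSet γ k) :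
    psiCE γ u = bumpHeight γ k := by
  rw [psiCE_eq_tsum, tsum_eq_single k fun j hjk => indicator_of_notMem
    (fun hj => hjk (eq_of_mem_bumpSet hγ hj hu)) _]
  exact indicator_of_mem hu _

theorem psiCE_eq_zero_of_notMem (hu : u ∉ ⋃ k, bumpSet γ k) : psiCE γ u = 0 := by
  rw [psiCE_eq_tsum]
  exact (tsum_congr fun k => indicator_of_notMem (fun h => hu (mem_iUnion_of_mem k h)) _).trans
    tsum_zero

theorem psiCE_nonneg (γ u : ℝ) : 0 ≤ psiCE γ u :=
  tsum_nonneg fun _ => indicator_nonneg (fun _ _ => rpow_nonneg (by positivity) _) _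

theorem psiCE_le_rpow (hγ : γ ∈ Ioo (0 : ℝ) 1) (hu : 0 ≤ u) :
    psiCE γ u ≤ (u + 1) ^ ((2 + γ) / (1 - γ)) := by
  by_cases h : ∃ k, u ∈ bumpSet γ k
  · obtain ⟨k, hk⟩ := h
    rw [psiCE_eq_of_mem_bumpSet hγ.2 hk, bumpHeight]
    exact rpow_le_rpow (by positivity) (by linarith [(bumpSet_subset_Ioo hγ.2 k hk).1])
      (div_nonneg (by linarith [hγ.1]) (by linarith [hγ.2]))
  · rw [psiCE_eq_zero_of_notMem (by simpa using h)]
    positivity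

theorem volume_real_bumpSet (γ : ℝ) (k : ℕ) :
    volume.real (bumpSet γ k) = ((k : ℝ) + 1) ^ (-((4 - γ) / (1 - γ))) := by
  have hwidth := rpow_nonneg (k.cast_add_one_pos (α := ℝ)).le (-((4 - γ) / (1 - γ)))
  rw [bumpSet, volume_real_Ioo_of_le (by linarith)]
  ring

theorem setIntegral_bumpSet_psiCE (hγ : γ < 1) (k : ℕ) :
    ∫ u in bumpSet γ k, psiCE γ u = ((k : ℝ) + 1) ^ (-2 : ℝ) := by
  rw [setIntegral_congr_fun (measurableSet_bumpSet γ k) fun _ hu =>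
      psiCE_eq_of_mem_bumpSet hγ hu,
    setIntegral_const, volume_real_bumpSet, smul_eq_mul, bumpHeight, ← rpow_add (by positivity)]
  congr 1
  field_simp [(sub_pos.2 hγ).ne']
  ring

theorem integrableOn_bumpSet_psiCE (hγ : γ < 1) (k : ℕ) : IntegrableOn (psiCE γ) (bumpSet γ k) :=
  (integrableOn_congr_fun (fun _ hu => (psiCE_eq_of_mem_bumpSet hγ hu).symm)
    (measurableSet_bumpSet γ k)).1 (integrableOn_const measure_Ioo_lt_top.ne)

theorem summable_nat_add_one_rpow_neg_two : Summable fun n : ℕ => ((n : ℝ) + 1) ^ (-2 : ℝ) := by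
  exact_mod_cast (summable_nat_add_iff 1).2
    (Real.summable_nat_rpow.2 (by norm_num : (-2 : ℝ) < -1))

theorem integrableOn_iUnion_bumpSet_psiCE (hγ : γ < 1) :
    IntegrableOn (psiCE γ) (⋃ k, bumpSet γ k) := by
  refine integrableOn_iUnion_of_summable_integral_norm (integrableOn_bumpSet_psiCE hγ) ?_
  simp_rw [Real.norm_of_nonneg (psiCE_nonneg γ _), setIntegral_bumpSet_psiCE hγ]
  exact summable_nat_add_one_rpow_neg_two

theorem integrableOn_Ioi_psiCE (hγ : γ < 1) : IntegrableOn (psiCE γ) (Ioi 0) :=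
  (integrableOn_iUnion_bumpSet_psiCE hγ).of_forall_sdiff_eq_zero measurableSet_Ioi
    fun _ hu => psiCE_eq_zero_of_notMem hu.2

theorem integral_Ioi_psiCE (hγ : γ < 1) :
    ∫ u in Ioi 0, psiCE γ u = ∑' n : ℕ, ((n : ℝ) + 1) ^ (-2 : ℝ) := by
  rw [setIntegral_eq_of_subset_of_forall_sdiff_eq_zero measurableSet_Ioi
    (iUnion_subset (bumpSet_subset_Ioi hγ)) fun _ hu => psiCE_eq_zero_of_notMem hu.2,
    integral_iUnion (measurableSet_bumpSet γ) (pairwise_disjoint_bumpSet hγ)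
      (integrableOn_iUnion_bumpSet_psiCE hγ)]
  exact tsum_congr (setIntegral_bumpSet_psiCE hγ)

theorem integrableOn_weight_sub_one_mul_psiCE (hγ : γ ∈ Ioo (0 : ℝ) 1) {t : ℝ} (ht : 0 < t) :
    IntegrableOn (fun u => ((1 - u / t) ^ (γ - 1) - 1) * psiCE γ u) (Ioo 0 t) := by
  have hw : IntegrableOn (fun u => (1 - u / t) ^ (γ - 1) - 1) (Ioo 0 t) :=
    ((integrableOn_one_sub_div_rpow hγ.1 ht).mono_set Ioo_subset_Ioc_self).sub
      (integrableOn_const measure_Ioo_lt_top.ne)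
  refine hw.mul_bdd (c := (t + 1) ^ ((2 + γ) / (1 - γ)))
    ((integrableOn_Ioi_psiCE hγ.2).mono_set fun _ hu => hu.1).1 ?_
  filter_upwards [ae_restrict_mem measurableSet_Ioo] with u hu
  rw [Real.norm_of_nonneg (psiCE_nonneg γ u)]
  exact (psiCE_le_rpow hγ hu.1.le).trans (rpow_le_rpow (by linarith [hu.1]) (by linarith [hu.2])
    (div_nonneg (by linarith [hγ.1]) (by linarith [hγ.2])))

theorem setIntegral_bumpSet_weight_sub_one_mul_psiCE (hγ : γ ∈ Ioo (0 : ℝ) 1) (k : ℕ) :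
    ∫ u in bumpSet γ k, ((1 - u / (k + 1)) ^ (γ - 1) - 1) * psiCE γ u =
      γ⁻¹ * ((k : ℝ) + 1) ^ (3 - 2 * γ) - ((k : ℝ) + 1) ^ (-2 : ℝ) := by
  set t : ℝ := k + 1 with ht_def
  set α : ℝ := (4 - γ) / (1 - γ)
  set β : ℝ := (2 + γ) / (1 - γ)
  have ht : 0 < t := k.cast_add_one_pos
  have hbump : bumpSet γ k = Ioo (t - t ^ (-α)) t := rfl
  rw [setIntegral_congr_fun (measurableSet_bumpSet γ k) fun u hu =>
      congrArg _ (psiCE_eq_of_mem_bumpSet hγ.2 hu), integral_mul_const, hbump,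
    setIntegral_one_sub_div_rpow_sub_one hγ.1 ht (rpow_nonneg ht.le _), bumpHeight,
    ← ht_def, ← rpow_sub_one ht.ne', ← rpow_mul ht.le]
  have h1γ : 1 - γ ≠ 0 := (sub_pos.2 hγ.2).ne'
  have hexp : 3 - 2 * γ = 1 + (-α - 1) * γ + β := by
    simp only [α, β]
    field_simp
    ring
  have hexp' : (-2 : ℝ) = -α + β := by
    simp only [α, β]
    field_simp
    ring
  rw [hexp, hexp']
  simp only [rpow_add ht, rpow_one]
  ring

theorem le_Iweight_psiCE_add_one (hγ : γ ∈ Ioo (0 : ℝ) 1) (k : ℕ) :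
    γ⁻¹ * ((k : ℝ) + 1) ^ (3 - 2 * γ) - ((k : ℝ) + 1) ^ (-2 : ℝ) ≤
      Iweight γ (psiCE γ) (k + 1) := by
  rw [← setIntegral_bumpSet_weight_sub_one_mul_psiCE hγ k]
  refine setIntegral_mono_set (integrableOn_weight_sub_one_mul_psiCE hγ k.cast_add_one_pos) ?_
    ((bumpSet_subset_Ioo hγ.2 k).trans (Ioo_subset_Ioo_left k.cast_nonneg)).eventuallyLE
  filter_upwards [ae_restrict_mem measurableSet_Ioo] with u hu
  exact mul_nonneg (sub_nonneg.2 (one_le_one_sub_div_rpow hγ.2.le hu.1.le hu.2)) (psiCE_nonneg γ u)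

theorem natCast_le_integral_weight_mul_psiCE (hγ : γ ∈ Ioo (0 : ℝ) 1) (k : ℕ) :
    (k : ℝ) ≤ ∫ u in Ioo 0 ((k : ℝ) + 1), (1 - u / (k + 1)) ^ (γ - 1) * psiCE γ u := by
  set t : ℝ := k + 1
  have ht : 1 ≤ t := by simp [t]
  have hpow : t ≤ t ^ (3 - 2 * γ) := by
    simpa using rpow_le_rpow_of_exponent_le ht (by linarith [hγ.2] : (1 : ℝ) ≤ 3 - 2 * γ)
  have hinv : 1 ≤ γ⁻¹ := (one_le_inv₀ hγ.1).2 hγ.2.le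
  have hmain : t ≤ γ⁻¹ * t ^ (3 - 2 * γ) := hpow.trans (le_mul_of_one_le_left (by positivity) hinv)
  have hsmall : t ^ (-2 : ℝ) ≤ 1 := rpow_le_one_of_one_le_of_nonpos ht (by norm_num)
  have hψ : 0 ≤ ∫ u in Ioo 0 t, psiCE γ u :=
    setIntegral_nonneg measurableSet_Ioo fun u _ => psiCE_nonneg γ u
  rw [integral_weight_mul_eq_Iweight_add (integrableOn_weight_sub_one_mul_psiCE hγ (by linarith))
    ((integrableOn_Ioi_psiCE hγ.2).mono_set fun _ hu => hu.1)]
  linarith [le_Iweight_psiCE_add_one hγ k]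

end

/-- Counterexample: `ψ` is integrable on `(0,∞)` with
`∫_0^∞ ψ = Σ_{n≥1} n^{−2} < ∞`, yet `I(ψ, n) ≥ γ⁻¹ n^{3−2γ} − n^{−2}` for every
`n ≥ 1`; in particular `∫_0^t (1 − u/t)^{γ−1} ψ(u) du` does not converge to
`∫_0^∞ ψ(u) du` as `t → ∞`. -/
theorem counterexample_singular_weight (γ : ℝ) (hγ : γ ∈ Ioo (0 : ℝ) 1) :
    IntegrableOn (psiCE γ) (Ioi 0) ∧
    Summable (fun n : ℕ => ((n : ℝ) + 1) ^ (-2 : ℝ)) ∧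
    (∫ u in Ioi (0 : ℝ), psiCE γ u) = ∑' n : ℕ, ((n : ℝ) + 1) ^ (-2 : ℝ) ∧
    (∀ n : ℕ, 1 ≤ n →
      γ⁻¹ * (n : ℝ) ^ (3 - 2 * γ) - (n : ℝ) ^ (-2 : ℝ) ≤ Iweight γ (psiCE γ) n) ∧
    ¬ Tendsto (fun t : ℝ => ∫ u in Ioo (0 : ℝ) t, (1 - u / t) ^ (γ - 1) * psiCE γ u)
        atTop (nhds (∫ u in Ioi (0 : ℝ), psiCE γ u)) := by
  refine ⟨integrableOn_Ioi_psiCE hγ.2, summable_nat_add_one_rpow_neg_two, integral_Ioi_psiCE hγ.2,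
    fun n hn => ?_, fun hlim => ?_⟩
  · obtain ⟨k, rfl⟩ := Nat.exists_eq_add_of_le' hn
    exact_mod_cast le_Iweight_psiCE_add_one hγ k
  · exact not_tendsto_atTop_of_tendsto_nhds
      (hlim.comp (tendsto_atTop_add_const_right _ 1 tendsto_natCast_atTop_atTop))
      (tendsto_atTop_mono (natCast_le_integral_weight_mul_psiCE hγ) tendsto_natCast_atTop_atTop)
end

section
/- Let β ∈ (0,1), let ρ : (0,∞) → [0,∞) be a measurable function such that v ↦ v·ρ(v) is bounded on (0,∞) and v·ρ(v) → 0 as v → ∞, and let f : (0,∞) → [0,∞) be Lebesgue integrable. Define ψ(u) = ∫_0^∞ s^{−1/β} ρ(s^{−1/β} u) f(s) ds for u > 0. Then u·ψ(u) → 0 as u → ∞; consequently t · sup_{u>t} ψ(u) → 0 as t → ∞. -/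
open MeasureTheory Set Filter Real

/-- Analytic core of the local-time penalisation lemma: let `β ∈ (0,1)`, let
`ρ ≥ 0` be measurable with `v · ρ(v)` bounded on `(0,∞)` and `v · ρ(v) → 0` as
`v → ∞`, and let `f ≥ 0` be Lebesgue integrable on `(0,∞)`. Define
`ψ(u) = ∫_0^∞ s^{−1/β} ρ(s^{−1/β} u) f(s) ds`. Then `u · ψ(u) → 0` as `u → ∞`;
consequently `t · sup_{u>t} ψ(u) → 0` as `t → ∞`. -/
theorem penalisation_density_decay (β : ℝ) (hβ : β ∈ Ioo (0 : ℝ) 1)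
    (ρ : ℝ → ℝ) (hρ_nonneg : ∀ v : ℝ, 0 < v → 0 ≤ ρ v)
    (hρ_meas : Measurable ρ)
    (hρ_bdd : ∃ M : ℝ, ∀ v : ℝ, 0 < v → v * ρ v ≤ M)
    (hρ_lim : Tendsto (fun v : ℝ => v * ρ v) atTop (nhds 0))
    (f : ℝ → ℝ) (hf_nonneg : ∀ s : ℝ, 0 < s → 0 ≤ f s)
    (hf_int : IntegrableOn f (Ioi 0))
    (ψ : ℝ → ℝ)
    (hψ : ∀ u : ℝ, 0 < u →
      ψ u = ∫ s in Ioi (0 : ℝ), s ^ (-(1 / β)) * ρ (s ^ (-(1 / β)) * u) * f s) :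
    Tendsto (fun u : ℝ => u * ψ u) atTop (nhds 0) ∧
    (∀ᶠ t : ℝ in atTop, BddAbove (ψ '' Ioi t)) ∧
    Tendsto (fun t : ℝ => t * sSup (ψ '' Ioi t)) atTop (nhds 0) := by
  obtain ⟨M, hM⟩ := hρ_bdd
  set M' : ℝ := max M 0 with hM'def
  have hM'0 : (0:ℝ) ≤ M' := le_max_right _ _
  have hgM : ∀ v : ℝ, 0 < v → v * ρ v ≤ M' := fun v hv =>
    (hM v hv).trans (le_max_left _ _)
  set F : ℝ → ℝ → ℝ := fun u s =>
    (s ^ (-(1 / β)) * u) * ρ (s ^ (-(1 / β)) * u) * f s with hFdef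
  have hmeas : ∀ u : ℝ,
      AEStronglyMeasurable (F u) (volume.restrict (Ioi 0)) := by
    intro u
    have h1 : Measurable fun s : ℝ =>
        (s ^ (-(1 / β)) * u) * ρ (s ^ (-(1 / β)) * u) := by
      have hr : Measurable fun s : ℝ => s ^ (-(1 / β)) * u := by fun_prop
      exact hr.mul (hρ_meas.comp hr)
    exact h1.aestronglyMeasurable.mul hf_int.1
  have hbound : ∀ u : ℝ, 0 < u →
      ∀ᵐ s ∂(volume.restrict (Ioi 0)), ‖F u s‖ ≤ M' * f s := by
    intro u hu
    filter_upwards [ae_restrict_mem measurableSet_Ioi] with s hs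
    have hv : 0 < s ^ (-(1 / β)) * u := mul_pos (rpow_pos_of_pos hs _) hu
    have h1 : 0 ≤ F u s :=
      mul_nonneg (mul_nonneg hv.le (hρ_nonneg _ hv)) (hf_nonneg s hs)
    rw [Real.norm_of_nonneg h1]
    exact mul_le_mul_of_nonneg_right (hgM _ hv) (hf_nonneg s hs)
  have hbound_int : Integrable (fun s => M' * f s) (volume.restrict (Ioi 0)) :=
    hf_int.const_mul M'
  have hFint : ∀ u : ℝ, 0 < u → Integrable (F u) (volume.restrict (Ioi 0)) :=
    fun u hu => Integrable.mono' hbound_int (hmeas u) (hbound u hu)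
  have huψ : ∀ u : ℝ, 0 < u → u * ψ u = ∫ s in Ioi (0:ℝ), F u s := by
    intro u hu
    rw [hψ u hu, ← integral_const_mul]
    exact integral_congr_ae (Eventually.of_forall fun s => by simp [hFdef]; ring)
  -- part 1: dominated convergence
  have hpt : ∀ᵐ s ∂(volume.restrict (Ioi 0)),
      Tendsto (fun u => F u s) atTop (nhds 0) := by
    filter_upwards [ae_restrict_mem measurableSet_Ioi] with s hs
    have hc : 0 < s ^ (-(1 / β)) := rpow_pos_of_pos hs _
    have h1 : Tendsto (fun u : ℝ => s ^ (-(1 / β)) * u) atTop atTop :=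
      tendsto_id.const_mul_atTop hc
    have h2 : Tendsto (fun u : ℝ =>
        (s ^ (-(1 / β)) * u) * ρ (s ^ (-(1 / β)) * u)) atTop (nhds 0) :=
      hρ_lim.comp h1
    simpa only [zero_mul] using h2.mul_const (f s)
  have key : Tendsto (fun u => ∫ s in Ioi (0:ℝ), F u s) atTop (nhds 0) := by
    have := tendsto_integral_filter_of_dominated_convergence
      (μ := volume.restrict (Ioi 0)) (F := F) (f := fun _ => (0:ℝ))
      (bound := fun s => M' * f s) (l := atTop)
      (Eventually.of_forall hmeas)
      (by filter_upwards [eventually_gt_atTop (0:ℝ)] with u hu using hbound u hu)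
      hbound_int hpt
    simpa using this
  have part1 : Tendsto (fun u : ℝ => u * ψ u) atTop (nhds 0) := by
    apply key.congr'
    filter_upwards [eventually_gt_atTop (0:ℝ)] with u hu
    exact (huψ u hu).symm
  -- nonnegativity of ψ
  have ψ_nonneg : ∀ u : ℝ, 0 < u → 0 ≤ ψ u := by
    intro u hu
    rw [hψ u hu]
    apply setIntegral_nonneg measurableSet_Ioi
    intro s hs
    have hv : 0 < s ^ (-(1 / β)) * u := mul_pos (rpow_pos_of_pos hs _) hu
    exact mul_nonneg (mul_nonneg (rpow_nonneg hs.le _) (hρ_nonneg _ hv))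
      (hf_nonneg s hs)
  -- crude bound : u * ψ u ≤ C
  set C : ℝ := M' * ∫ s in Ioi (0:ℝ), f s with hCdef
  have hC0 : 0 ≤ C :=
    mul_nonneg hM'0 (setIntegral_nonneg measurableSet_Ioi fun s hs => hf_nonneg s hs)
  have hψle : ∀ u : ℝ, 0 < u → u * ψ u ≤ C := by
    intro u hu
    rw [huψ u hu, hCdef, ← integral_const_mul]
    refine integral_mono_ae (hFint u hu) hbound_int ?_
    filter_upwards [hbound u hu] with s hs
    exact (le_abs_self _).trans hs
  have bdd : ∀ t : ℝ, 0 < t → BddAbove (ψ '' Ioi t) := by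
    intro t ht
    refine ⟨C / t, ?_⟩
    rintro x ⟨u, hu, rfl⟩
    have hu0 : 0 < u := ht.trans hu
    have h1 : ψ u ≤ C / u := by
      rw [le_div_iff₀ hu0]
      calc ψ u * u = u * ψ u := mul_comm _ _
        _ ≤ C := hψle u hu0
    calc ψ u ≤ C / u := h1
      _ ≤ C / t := by gcongr; exact hu.le
  refine ⟨part1, ?_, ?_⟩
  · filter_upwards [eventually_gt_atTop (0:ℝ)] with t ht using bdd t ht
  · rw [NormedAddCommGroup.tendsto_nhds_zero]
    intro ε hε
    obtain ⟨T, hT⟩ := eventually_atTop.mp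
      (NormedAddCommGroup.tendsto_nhds_zero.mp part1 (ε / 2) (half_pos hε))
    filter_upwards [eventually_gt_atTop (0:ℝ), eventually_ge_atTop T] with t ht0 htT
    set S := sSup (ψ '' Ioi t) with hSdef
    have hmem : ψ (t + 1) ∈ ψ '' Ioi t := ⟨t + 1, lt_add_one t, rfl⟩
    have hne : (ψ '' Ioi t).Nonempty := ⟨_, hmem⟩
    have hS0 : 0 ≤ S :=
      (ψ_nonneg (t + 1) (by linarith)).trans (le_csSup (bdd t ht0) hmem)
    have hS : S ≤ ε / 2 / t := by
      refine csSup_le hne ?_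
      rintro x ⟨u, hu, rfl⟩
      have hu0 : 0 < u := ht0.trans hu
      have hTu := hT u (htT.trans hu.le)
      rw [Real.norm_eq_abs, abs_lt] at hTu
      have h1 : u * ψ u < ε / 2 := hTu.2
      rw [le_div_iff₀ ht0]
      nlinarith [ψ_nonneg u hu0, mem_Ioi.mp hu]
    have heq : t * (ε / 2 / t) = ε / 2 := by field_simp
    rw [Real.norm_eq_abs, abs_of_nonneg (mul_nonneg ht0.le hS0)]
    calc t * S ≤ t * (ε / 2 / t) := mul_le_mul_of_nonneg_left hS ht0.le
      _ = ε / 2 := heq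
      _ < ε := by linarith
end
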